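/- arXiv:1110.2564 — 3 statements merged into one kernel-verified Lean document; each statement's English description precedes it below -/
import Mathlib

section
/- Let P be a full rook placement on a Ferrers board F, and let V1, V2 be vertices on the right/up border of F such that V1 is directly to the left of V2 or directly below V2. Then the number of markers of P in R(V2) is exactly one greater than the number of markers of P in R(V1). -/
/-!
Common definitions: Ferrers boards, rook placements, pattern avoidance,
following Bloom–Saracino, "A Simple Bijection Between 231-Avoiding and
312-Avoiding Placements".

A square of the `n × n` array `𝒜` is recorded by the pair
`(column index, row index)` (0-based), i.e. the square `(c, r)` is the unit
square with SW corner `(c, r)` and NE corner `(c+1, r+1)`.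
-/

/-- A square of the grid, given by its (column index, row index), both 0-based. -/
abbrev Square : Type := ℕ × ℕ

/-- For a vertex `V = (a, b)`, `RV V` is the set of squares of the rectangle `R(V)`
bounded by the lines `x = 0`, `x = a`, `y = 0`, `y = b`: all squares with column
index `< a` and row index `< b`. -/
def RV (V : ℕ × ℕ) : Finset Square := Finset.range V.1 ×ˢ Finset.range V.2

/-- A Ferrers board contained in the `n × n` array `𝒜`: a set of squares such that
`R(V) ⊆ F` for every vertex `V` of `F`, i.e. a downward- and leftward-closed set
of squares. -/
structure FerrersBoard (n : ℕ) where
  squares : Finset Square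
  inArray : ∀ s ∈ squares, s.1 < n ∧ s.2 < n
  closed : ∀ s ∈ squares, ∀ t : Square, t.1 ≤ s.1 → t.2 ≤ s.2 → t ∈ squares

namespace FerrersBoard

variable {n : ℕ}

/-- The number of squares in column `c` of `F`. -/
def colHeight (F : FerrersBoard n) (c : ℕ) : ℕ :=
  (F.squares.filter fun s => s.1 = c).card

/-- The number of squares in row `r` of `F`. -/
def rowWidth (F : FerrersBoard n) (r : ℕ) : ℕ :=
  (F.squares.filter fun s => s.2 = r).card

/-- The length of the longest row of `F` (the bottom row, by closedness),
i.e. the number of nonempty columns of `F`. -/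
def width (F : FerrersBoard n) : ℕ := F.rowWidth 0

/-- The length of the longest column of `F` (the leftmost column, by closedness),
i.e. the number of nonempty rows of `F`. -/
def height (F : FerrersBoard n) : ℕ := F.colHeight 0

/-- `V` is a vertex of `F`, i.e. a corner of one of the squares of `F`. -/
def IsVertex (F : FerrersBoard n) (V : ℕ × ℕ) : Prop :=
  ∃ s ∈ F.squares, (V.1 = s.1 ∨ V.1 = s.1 + 1) ∧ (V.2 = s.2 ∨ V.2 = s.2 + 1)

/-- `V = (a, b)` lies on the right/up border of `F` (the border of `F` excluding
its vertical left-hand side and horizontal bottom): this border is the staircase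
lattice path from the top-left corner `(0, height F)` down to `(width F, 0)`, and
its vertices are exactly those `(a, b)` with `a ≤ width F` and
`colHeight a ≤ b ≤ colHeight (a - 1)` (where for `a = 0` truncated subtraction
makes the condition read `b = height F`). -/
def IsBorderVertex (F : FerrersBoard n) (V : ℕ × ℕ) : Prop :=
  V.1 ≤ F.width ∧ F.colHeight V.1 ≤ V.2 ∧ V.2 ≤ F.colHeight (V.1 - 1)

/-- `V1, V2` are `F`-diagonal vertices: both lie on the right/up border of `F`
and they are the left and right ends of a diagonal of slope `-1` lying entirely
within `F` (the diagonal from `V1 = (a, b)` to `V2 = (a + k, b - k)` passes, for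
each `0 ≤ i < k`, through the square with column `a + i` and row `b - i - 1`,
and all these squares must belong to `F`). -/
def DiagonalVertices (F : FerrersBoard n) (V1 V2 : ℕ × ℕ) : Prop :=
  F.IsBorderVertex V1 ∧ F.IsBorderVertex V2 ∧
    ∃ k : ℕ, V2.1 = V1.1 + k ∧ V1.2 = V2.2 + k ∧
      ∀ i < k, (V1.1 + i, V2.2 + (k - 1 - i)) ∈ F.squares

end FerrersBoard

/-- `V1` is directly to the left of `V2`. -/
def LeftOf (V1 V2 : ℕ × ℕ) : Prop := V2.1 = V1.1 + 1 ∧ V2.2 = V1.2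

/-- `V1` is directly below `V2`. -/
def Below (V1 V2 : ℕ × ℕ) : Prop := V2.1 = V1.1 ∧ V2.2 = V1.2 + 1

/-- `P` is a rook placement on the Ferrers board `F`: a subset of `F` containing
at most one square (marker) from each column and at most one from each row. -/
def IsRookPlacement {n : ℕ} (F : FerrersBoard n) (P : Finset Square) : Prop :=
  P ⊆ F.squares ∧ (∀ x ∈ P, ∀ y ∈ P, x.1 = y.1 → x = y) ∧
    (∀ x ∈ P, ∀ y ∈ P, x.2 = y.2 → x = y)

/-- `P` is a full rook placement on `F`: a rook placement with exactly one marker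
in each (nonempty) column and each (nonempty) row of `F`. -/
def IsFullPlacement {n : ℕ} (F : FerrersBoard n) (P : Finset Square) : Prop :=
  IsRookPlacement F P ∧
    ∀ s ∈ F.squares, (∃ r, (s.1, r) ∈ P) ∧ (∃ c, (c, s.2) ∈ P)

/-- The set of markers `M` contains an occurrence of the pattern `τ ∈ S₃`:
three markers, listed with strictly increasing columns, whose rows are ordered
as the values of `τ`. -/
def ContainsPattern (M : Finset Square) (τ : Equiv.Perm (Fin 3)) : Prop :=
  ∃ m : Fin 3 → Square, (∀ i, m i ∈ M) ∧
    (∀ i j : Fin 3, i < j → (m i).1 < (m j).1) ∧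
    (∀ i j : Fin 3, (m i).2 < (m j).2 ↔ τ i < τ j)

/-- The rook placement `P` on `F` avoids `τ`: for every vertex `V` on the
right/up border of `F`, the restriction of `P` to `R(V)` (equivalently, the
permutation order-isomorphic to it) avoids `τ`. -/
def AvoidsOn {n : ℕ} (F : FerrersBoard n) (P : Finset Square)
    (τ : Equiv.Perm (Fin 3)) : Prop :=
  ∀ V : ℕ × ℕ, F.IsBorderVertex V → ¬ ContainsPattern (P ∩ RV V) τ

/-- The pattern 231 (in one-line notation), as a permutation of `Fin 3`. -/
def perm231 : Equiv.Perm (Fin 3) := ⟨![1, 2, 0], ![2, 0, 1], by decide, by decide⟩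

/-- The pattern 312 (in one-line notation), as a permutation of `Fin 3`. -/
def perm312 : Equiv.Perm (Fin 3) := ⟨![2, 0, 1], ![1, 2, 0], by decide, by decide⟩

/-- The maximal length of an increasing sequence of markers of `M`. -/
noncomputable def maxIncSeq (M : Finset Square) : ℕ :=
  sSup {k : ℕ | ∃ f : Fin k → Square, (∀ i, f i ∈ M) ∧
    ∀ i j : Fin k, i < j → (f i).1 < (f j).1 ∧ (f i).2 < (f j).2}

/-- `S(P, V)`: the maximal length of an increasing sequence of markers of `P`
inside the rectangle `R(V)`.  The function `fun V => SPV P V`, restricted to the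
vertices of the right/up border of `F`, is the sequence `S(P, F)`. -/
noncomputable def SPV (P : Finset Square) (V : ℕ × ℕ) : ℕ := maxIncSeq (P ∩ RV V)

/-- The `S ↦ S⁺` operation on `F`-sequences, relative to the function
`N = N(F, ·)` counting markers in rectangles: `S⁺(V) = 0` if `S V = 0`, and
`S⁺(V) = N V + 1 - S V` otherwise. -/
def plusSeq (N S : ℕ × ℕ → ℕ) : ℕ × ℕ → ℕ :=
  fun V => if S V = 0 then 0 else N V + 1 - S V

/-- The 231-conditions for the pair `(F, S)`: monotonicity, the 0-conditions and
the (231-)diagonal condition. -/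
def Conditions231 {n : ℕ} (F : FerrersBoard n) (S : ℕ × ℕ → ℕ) : Prop :=
  -- (i) monotonicity conditions
  (∀ V1 V2 : ℕ × ℕ, F.IsBorderVertex V1 → F.IsBorderVertex V2 →
    (LeftOf V1 V2 ∨ Below V1 V2) → S V1 ≤ S V2 ∧ S V2 ≤ S V1 + 1) ∧
  -- (ii) 0-conditions: first and last values are 0, no two consecutive 0s
  S (0, F.height) = 0 ∧ S (F.width, 0) = 0 ∧
  (∀ V1 V2 : ℕ × ℕ, F.IsBorderVertex V1 → F.IsBorderVertex V2 →
    (LeftOf V1 V2 ∨ Below V1 V2) → ¬(S V1 = 0 ∧ S V2 = 0)) ∧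
  -- (iii) diagonal condition
  (∀ V1 V2 : ℕ × ℕ, F.DiagonalVertices V1 V2 → S V1 ≤ S V2)

/-- The 312-conditions for the pair `(F, S)`: the same as the 231-conditions,
with the inequality in the diagonal condition reversed. -/
def Conditions312 {n : ℕ} (F : FerrersBoard n) (S : ℕ × ℕ → ℕ) : Prop :=
  (∀ V1 V2 : ℕ × ℕ, F.IsBorderVertex V1 → F.IsBorderVertex V2 →
    (LeftOf V1 V2 ∨ Below V1 V2) → S V1 ≤ S V2 ∧ S V2 ≤ S V1 + 1) ∧
  S (0, F.height) = 0 ∧ S (F.width, 0) = 0 ∧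
  (∀ V1 V2 : ℕ × ℕ, F.IsBorderVertex V1 → F.IsBorderVertex V2 →
    (LeftOf V1 V2 ∨ Below V1 V2) → ¬(S V1 = 0 ∧ S V2 = 0)) ∧
  (∀ V1 V2 : ℕ × ℕ, F.DiagonalVertices V1 V2 → S V2 ≤ S V1)


section Aux

private lemma dc_eq_range (s : Finset ℕ) (h : ∀ x ∈ s, ∀ y, y ≤ x → y ∈ s) :
    s = Finset.range s.card := by
  ext x
  simp only [Finset.mem_range]
  constructor
  · intro hx
    have hsub : Finset.range (x + 1) ⊆ s := by
      intro y hy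
      exact h x hx y (Nat.lt_succ_iff.mp (Finset.mem_range.mp hy))
    have := Finset.card_le_card hsub
    simpa using this
  · intro hx
    by_contra hxs
    have hsub : s ⊆ Finset.range x := by
      intro y hy
      refine Finset.mem_range.mpr ?_
      by_contra hyx
      exact hxs (h y hy x (le_of_not_gt hyx))
    have := Finset.card_le_card hsub
    simp only [Finset.card_range] at this
    omega

private lemma fb_mem_iff {n : ℕ} (F : FerrersBoard n) (c r : ℕ) :
    (c, r) ∈ F.squares ↔ r < F.colHeight c := by
  set s := (F.squares.filter fun x => x.1 = c).image Prod.snd with hs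
  have hcard : s.card = F.colHeight c := by
    rw [hs, Finset.card_image_of_injOn]
    · rfl
    · intro x hx y hy hxy
      simp only [Finset.coe_filter, Set.mem_setOf_eq] at hx hy
      exact Prod.ext (hx.2.trans hy.2.symm) hxy
  have hdc : ∀ x ∈ s, ∀ y, y ≤ x → y ∈ s := by
    intro x hx y hyx
    simp only [hs, Finset.mem_image, Finset.mem_filter] at hx ⊢
    obtain ⟨⟨c', r'⟩, ⟨hmem, hc⟩, hr⟩ := hx
    simp only at hc hr
    subst hc; subst hr
    exact ⟨(c', y), ⟨F.closed _ hmem (c', y) le_rfl hyx, rfl⟩, rfl⟩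
  have hmem : (c, r) ∈ F.squares ↔ r ∈ s := by
    simp only [hs, Finset.mem_image, Finset.mem_filter]
    constructor
    · intro h; exact ⟨(c, r), ⟨h, rfl⟩, rfl⟩
    · rintro ⟨⟨c', r'⟩, ⟨hm, hc⟩, hr⟩
      simp only at hc hr
      subst hc; subst hr; exact hm
  rw [hmem, dc_eq_range s hdc, Finset.mem_range, hcard]

private lemma fb_bottom_iff {n : ℕ} (F : FerrersBoard n) (c : ℕ) :
    (c, 0) ∈ F.squares ↔ c < F.width := by
  set s := (F.squares.filter fun x => x.2 = 0).image Prod.fst with hs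
  have hcard : s.card = F.width := by
    rw [hs, Finset.card_image_of_injOn]
    · rfl
    · intro x hx y hy hxy
      simp only [Finset.coe_filter, Set.mem_setOf_eq] at hx hy
      exact Prod.ext hxy (hx.2.trans hy.2.symm)
  have hdc : ∀ x ∈ s, ∀ y, y ≤ x → y ∈ s := by
    intro x hx y hyx
    simp only [hs, Finset.mem_image, Finset.mem_filter] at hx ⊢
    obtain ⟨⟨c', r'⟩, ⟨hmem, hr⟩, hc⟩ := hx
    simp only at hc hr
    subst hc; subst hr
    exact ⟨(y, 0), ⟨F.closed _ hmem (y, 0) hyx le_rfl, rfl⟩, rfl⟩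
  have hmem : (c, 0) ∈ F.squares ↔ c ∈ s := by
    simp only [hs, Finset.mem_image, Finset.mem_filter]
    constructor
    · intro h; exact ⟨(c, 0), ⟨h, rfl⟩, rfl⟩
    · rintro ⟨⟨c', r'⟩, ⟨hm, hr⟩, hc⟩
      simp only at hc hr
      subst hc; subst hr; exact hm
  rw [hmem, dc_eq_range s hdc, Finset.mem_range, hcard]

private lemma fb_row_lt_height {n : ℕ} (F : FerrersBoard n) {c r : ℕ}
    (h : (c, r) ∈ F.squares) : r < F.height := by
  have : (0, r) ∈ F.squares := F.closed _ h (0, r) (Nat.zero_le _) le_rfl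
  exact (fb_mem_iff F 0 r).mp this

/-- Markers with column `< a`, for `a ≤ width`, number exactly `a`. -/
private lemma count_cols {n : ℕ} (F : FerrersBoard n) (P : Finset Square)
    (hP : IsFullPlacement F P) {a : ℕ} (ha : a ≤ F.width) :
    (P.filter fun s => s.1 < a).card = a := by
  have himg : (P.filter fun s => s.1 < a).image Prod.fst = Finset.range a := by
    ext j
    simp only [Finset.mem_image, Finset.mem_filter, Finset.mem_range]
    constructor
    · rintro ⟨⟨c, r⟩, ⟨_, hc⟩, rfl⟩; exact hc
    · intro hj
      have hjF : (j, 0) ∈ F.squares := (fb_bottom_iff F j).mpr (lt_of_lt_of_le hj ha)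
      obtain ⟨r, hr⟩ := (hP.2 _ hjF).1
      exact ⟨(j, r), ⟨hr, hj⟩, rfl⟩
  have hinj : Set.InjOn (Prod.fst : Square → ℕ) ((P.filter fun s => s.1 < a) : Finset Square) := by
    intro x hx y hy hxy
    simp only [Finset.coe_filter, Set.mem_setOf_eq] at hx hy
    exact hP.1.2.1 x hx.1 y hy.1 hxy
  rw [← Finset.card_image_of_injOn hinj, himg, Finset.card_range]

/-- Markers with row `≥ b`, for `b ≤ height`, number exactly `height - b`. -/
private lemma count_rows_ge {n : ℕ} (F : FerrersBoard n) (P : Finset Square)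
    (hP : IsFullPlacement F P) {b : ℕ} (hb : b ≤ F.height) :
    (P.filter fun s => b ≤ s.2).card = F.height - b := by
  have himg : (P.filter fun s => b ≤ s.2).image Prod.snd = Finset.Ico b F.height := by
    ext r
    simp only [Finset.mem_image, Finset.mem_filter, Finset.mem_Ico]
    constructor
    · rintro ⟨⟨c, r'⟩, ⟨hm, hr⟩, rfl⟩
      exact ⟨hr, fb_row_lt_height F (hP.1.1 hm)⟩
    · rintro ⟨hbr, hrh⟩
      have hrF : (0, r) ∈ F.squares := (fb_mem_iff F 0 r).mpr hrh
      obtain ⟨c, hc⟩ := (hP.2 _ hrF).2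
      exact ⟨(c, r), ⟨hc, hbr⟩, rfl⟩
  have hinj : Set.InjOn (Prod.snd : Square → ℕ) ((P.filter fun s => b ≤ s.2) : Finset Square) := by
    intro x hx y hy hxy
    simp only [Finset.coe_filter, Set.mem_setOf_eq] at hx hy
    exact hP.1.2.2 x hx.1 y hy.1 hxy
  rw [← Finset.card_image_of_injOn hinj, himg, Nat.card_Ico]

private lemma count_border {n : ℕ} (F : FerrersBoard n) (P : Finset Square)
    (hP : IsFullPlacement F P) (V : ℕ × ℕ) (hV : F.IsBorderVertex V) :
    (P ∩ RV V).card + F.height = V.1 + V.2 := by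
  obtain ⟨a, b⟩ := V
  obtain ⟨ha, hcb, hbc⟩ := hV
  simp only at ha hcb hbc ⊢
  have hbh : b ≤ F.height := le_trans hbc (by
    -- colHeight (a-1) ≤ colHeight 0 = height
    show F.colHeight (a - 1) ≤ F.height
    rcases Nat.eq_zero_or_pos (F.colHeight (a - 1)) with h0 | h0
    · omega
    · have : (a - 1, F.colHeight (a - 1) - 1) ∈ F.squares :=
        (fb_mem_iff F _ _).mpr (by omega)
      have := fb_row_lt_height F this
      omega)
  -- P ∩ RV (a,b) as a filter
  have hinter : P ∩ RV (a, b) = P.filter fun s => s.1 < a ∧ s.2 < b := by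
    ext s
    simp [RV, Finset.mem_inter, Finset.mem_product, Finset.mem_filter, and_assoc]
  -- markers with row ≥ b all have column < a
  have hkey : ∀ s ∈ P, b ≤ s.2 → s.1 < a := by
    rintro ⟨c, r⟩ hm hbr
    by_contra hca
    have hmF : (c, r) ∈ F.squares := hP.1.1 hm
    have : (a, r) ∈ F.squares := F.closed _ hmF (a, r) (le_of_not_gt hca) le_rfl
    have := (fb_mem_iff F a r).mp this
    simp only at hbr
    omega
  have hsplit : ((P.filter fun s => s.1 < a).filter fun s => s.2 < b).card
      + ((P.filter fun s => s.1 < a).filter fun s => ¬ s.2 < b).card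
      = (P.filter fun s => s.1 < a).card :=
    Finset.card_filter_add_card_filter_not _
  rw [Finset.filter_filter, Finset.filter_filter] at hsplit
  have h1 : (P.filter fun s => s.1 < a ∧ ¬ s.2 < b) = P.filter fun s => b ≤ s.2 := by
    ext s
    simp only [Finset.mem_filter, not_lt]
    constructor
    · rintro ⟨hm, _, h⟩; exact ⟨hm, h⟩
    · rintro ⟨hm, h⟩; exact ⟨hm, hkey s hm h, h⟩
  rw [h1, count_rows_ge F P hP hbh, count_cols F P hP ha] at hsplit
  rw [hinter]
  omega

end Aux

/-- If `P` is a full rook placement on a Ferrers board `F` and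
`V1`, `V2` are vertices on the right/up border of `F` with `V1` directly to the
left of or directly below `V2`, then the number of markers of `P` in `R(V2)` is
one greater than the number of markers of `P` in `R(V1)`. -/
theorem marker_count_succ {n : ℕ} (F : FerrersBoard n) (P : Finset Square)
    (hP : IsFullPlacement F P) (V1 V2 : ℕ × ℕ)
    (h1 : F.IsBorderVertex V1) (h2 : F.IsBorderVertex V2)
    (hadj : LeftOf V1 V2 ∨ Below V1 V2) :
    (P ∩ RV V2).card = (P ∩ RV V1).card + 1 := by
  have e1 := count_border F P hP V1 h1
  have e2 := count_border F P hP V2 h2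
  rcases hadj with ⟨hx, hy⟩ | ⟨hx, hy⟩ <;> omega
end

section
/- Let P be a full rook placement on a Ferrers board F and let S = S(P,F). If the pair (F,S) satisfies the 231-conditions, then the pair (F,S^+) satisfies the 312-conditions. -/
section Auxiliary

lemma mem_RV {s : Square} {V : ℕ × ℕ} : s ∈ RV V ↔ s.1 < V.1 ∧ s.2 < V.2 := by
  simp [RV, Finset.mem_product]

lemma aux_incseq_le_card {M : Finset Square} {k : ℕ} (f : Fin k → Square)
    (hf : ∀ i, f i ∈ M)
    (hm : ∀ i j : Fin k, i < j → (f i).1 < (f j).1 ∧ (f i).2 < (f j).2) :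
    k ≤ M.card := by
  have hinj : Set.InjOn f (Finset.univ : Finset (Fin k)) := by
    intro i _ j _ hij
    rcases lt_trichotomy i j with h | h | h
    · exact absurd ((hm i j h).1) (by rw [hij]; exact lt_irrefl _)
    · exact h
    · exact absurd ((hm j i h).1) (by rw [hij]; exact lt_irrefl _)
  have := Finset.card_le_card_of_injOn f (fun i _ => hf i) hinj
  simpa using this

lemma maxIncSeq_le_card (M : Finset Square) : maxIncSeq M ≤ M.card := by
  apply csSup_le
  · exact ⟨0, Fin.elim0, fun i => i.elim0, fun i j _ => i.elim0⟩
  · rintro k ⟨f, hf, hm⟩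
    exact aux_incseq_le_card f hf hm

lemma one_le_maxIncSeq {M : Finset Square} (h : M.Nonempty) : 1 ≤ maxIncSeq M := by
  obtain ⟨m, hm⟩ := h
  apply le_csSup
  · refine ⟨M.card, ?_⟩
    rintro k ⟨f, hf, hmo⟩
    exact aux_incseq_le_card f hf hmo
  · refine ⟨fun _ => m, fun _ => hm, fun i j hij => ?_⟩
    rw [Subsingleton.elim i j] at hij
    exact absurd hij (lt_irrefl _)

namespace FerrersBoard

variable {n : ℕ}

lemma mem_iff_lt_colHeight (F : FerrersBoard n) (c r : ℕ) :
    ((c, r) : Square) ∈ F.squares ↔ r < F.colHeight c := by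
  constructor
  · intro h
    have hsub : (Finset.range (r + 1)).image (fun j => ((c, j) : Square)) ⊆
        F.squares.filter (fun s => s.1 = c) := by
      intro s hs
      simp only [Finset.mem_image, Finset.mem_range] at hs
      obtain ⟨j, hj, rfl⟩ := hs
      exact Finset.mem_filter.2 ⟨F.closed _ h (c, j) le_rfl (by omega), rfl⟩
    have hcard := Finset.card_le_card hsub
    rwa [Finset.card_image_of_injective _ (fun x y hxy => by simpa using hxy),
      Finset.card_range] at hcard
  · intro h
    by_contra hmem
    have hsub : F.squares.filter (fun s => s.1 = c) ⊆
        (Finset.range r).image (fun j => ((c, j) : Square)) := by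
      intro s hs
      obtain ⟨hsF, hsc⟩ := Finset.mem_filter.1 hs
      have h2 : s.2 < r := by
        by_contra h2
        exact hmem (F.closed s hsF (c, r) (by omega) (by omega))
      simp only [Finset.mem_image, Finset.mem_range]
      exact ⟨s.2, h2, by rw [← hsc]⟩
    have hcard := (Finset.card_le_card hsub).trans
      ((Finset.card_image_le).trans (le_of_eq (Finset.card_range r)))
    have : F.colHeight c ≤ r := hcard
    omega

lemma colHeight_antitone (F : FerrersBoard n) {a c : ℕ} (h : a ≤ c) :
    F.colHeight c ≤ F.colHeight a := by
  by_contra hlt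
  push_neg at hlt
  have h1 : ((c, F.colHeight a) : Square) ∈ F.squares :=
    (F.mem_iff_lt_colHeight c _).2 hlt
  have h2 : ((a, F.colHeight a) : Square) ∈ F.squares := F.closed _ h1 _ h le_rfl
  have := (F.mem_iff_lt_colHeight a _).1 h2
  omega

end FerrersBoard

lemma card_RV_right {n : ℕ} (F : FerrersBoard n) (P : Finset Square)
    (hP : IsFullPlacement F P) {a b : ℕ} (hb : F.colHeight a = b) (hb1 : 1 ≤ b) :
    (P ∩ RV (a + 1, b)).card = (P ∩ RV (a, b)).card + 1 := by
  obtain ⟨⟨hsub, hcol, hrow⟩, hfull⟩ := hP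
  have hc0 : ((a, 0) : Square) ∈ F.squares := (F.mem_iff_lt_colHeight a 0).2 (by omega)
  obtain ⟨r, hr⟩ := (hfull (a, 0) hc0).1
  have hrb : r < b := by
    have := (F.mem_iff_lt_colHeight a r).1 (hsub hr)
    omega
  have hins : P ∩ RV (a + 1, b) = insert (a, r) (P ∩ RV (a, b)) := by
    ext s
    simp only [Finset.mem_inter, Finset.mem_insert, mem_RV]
    constructor
    · rintro ⟨hsP, h1, h2⟩
      rcases Nat.lt_or_ge s.1 a with h | h
      · exact Or.inr ⟨hsP, h, h2⟩
      · have hse : s.1 = a := by omega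
        exact Or.inl (hcol s hsP (a, r) hr hse)
    · rintro (rfl | ⟨hsP, h1, h2⟩)
      · exact ⟨hr, Nat.lt_succ_self a, hrb⟩
      · exact ⟨hsP, by omega, h2⟩
  rw [hins, Finset.card_insert_of_notMem (by simp [mem_RV])]

lemma card_RV_up {n : ℕ} (F : FerrersBoard n) (P : Finset Square)
    (hP : IsFullPlacement F P) {a b : ℕ} (hca : F.colHeight a ≤ b)
    (hprev : b < F.colHeight (a - 1)) (ha1 : 1 ≤ a) :
    (P ∩ RV (a, b + 1)).card = (P ∩ RV (a, b)).card + 1 := by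
  obtain ⟨⟨hsub, hcol, hrow⟩, hfull⟩ := hP
  have hsq : ((a - 1, b) : Square) ∈ F.squares := (F.mem_iff_lt_colHeight _ _).2 hprev
  obtain ⟨c, hc⟩ := (hfull (a - 1, b) hsq).2
  have hca' : c < a := by
    by_contra h
    push_neg at h
    have hmem : ((a, b) : Square) ∈ F.squares := F.closed (c, b) (hsub hc) (a, b) h le_rfl
    have := (F.mem_iff_lt_colHeight a b).1 hmem
    omega
  have hins : P ∩ RV (a, b + 1) = insert (c, b) (P ∩ RV (a, b)) := by
    ext s
    simp only [Finset.mem_inter, Finset.mem_insert, mem_RV]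
    constructor
    · rintro ⟨hsP, h1, h2⟩
      rcases Nat.lt_or_ge s.2 b with h | h
      · exact Or.inr ⟨hsP, h1, h⟩
      · have hse : s.2 = b := by omega
        exact Or.inl (hrow s hsP (c, b) hc hse)
    · rintro (rfl | ⟨hsP, h1, h2⟩)
      · exact ⟨hc, hca', Nat.lt_succ_self b⟩
      · exact ⟨hsP, h1, by omega⟩
  rw [hins, Finset.card_insert_of_notMem (by simp [mem_RV])]

lemma card_RV_diag {n : ℕ} (F : FerrersBoard n) (P : Finset Square)
    (hP : IsFullPlacement F P) {a b k : ℕ}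
    (hd : ∀ i < k, ((a + i, b + (k - 1 - i)) : Square) ∈ F.squares)
    (h1 : F.colHeight a ≤ b + k) (h2 : F.colHeight (a + k) ≤ b) :
    (P ∩ RV (a, b + k)).card = (P ∩ RV (a + k, b)).card := by
  obtain ⟨⟨hsub, hcol, hrow⟩, hfull⟩ := hP
  -- markers in the column strip have bounded row; row strip bounded column
  have hColBound : ∀ s ∈ P, a ≤ s.1 → s.1 < a + k → s.2 < b + k := by
    intro s hs hge hlt
    have hF : ((s.1, s.2) : Square) ∈ F.squares := hsub hs
    have hlt2 := (F.mem_iff_lt_colHeight s.1 s.2).1 hF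
    have := F.colHeight_antitone (a := a) (c := s.1) hge
    omega
  have hRowBound : ∀ s ∈ P, b ≤ s.2 → s.2 < b + k → s.1 < a + k := by
    intro s hs hge hlt
    by_contra h
    push_neg at h
    have hmem : ((a + k, b) : Square) ∈ F.squares :=
      F.closed s (hsub hs) (a + k, b) h hge
    have := (F.mem_iff_lt_colHeight (a + k) b).1 hmem
    omega
  set base := P.filter (fun s => s.1 < a ∧ s.2 < b) with hbase
  set A := P.filter (fun s => a ≤ s.1 ∧ s.1 < a + k ∧ s.2 < b) with hA
  set B := P.filter (fun s => s.1 < a ∧ b ≤ s.2 ∧ s.2 < b + k) with hB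
  set D := P.filter (fun s => a ≤ s.1 ∧ s.1 < a + k ∧ b ≤ s.2 ∧ s.2 < b + k) with hD
  have hV1 : P ∩ RV (a, b + k) = base ∪ B := by
    ext s
    simp only [hbase, hB, Finset.mem_inter, Finset.mem_union, Finset.mem_filter, mem_RV]
    constructor
    · rintro ⟨hs, hx, hy⟩
      rcases Nat.lt_or_ge s.2 b with h | h
      · exact Or.inl ⟨hs, hx, h⟩
      · exact Or.inr ⟨hs, hx, h, hy⟩
    · rintro (⟨hs, hx, hy⟩ | ⟨hs, hx, hy, hz⟩)
      · exact ⟨hs, hx, by omega⟩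
      · exact ⟨hs, hx, hz⟩
  have hV2 : P ∩ RV (a + k, b) = base ∪ A := by
    ext s
    simp only [hbase, hA, Finset.mem_inter, Finset.mem_union, Finset.mem_filter, mem_RV]
    constructor
    · rintro ⟨hs, hx, hy⟩
      rcases Nat.lt_or_ge s.1 a with h | h
      · exact Or.inl ⟨hs, h, hy⟩
      · exact Or.inr ⟨hs, h, hx, hy⟩
    · rintro (⟨hs, hx, hy⟩ | ⟨hs, hx, hy, hz⟩)
      · exact ⟨hs, by omega, hy⟩
      · exact ⟨hs, hy, hz⟩
  have hdisj1 : Disjoint base B := by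
    rw [Finset.disjoint_left]
    rintro s hs ht
    simp only [hbase, hB, Finset.mem_filter] at hs ht
    omega
  have hdisj2 : Disjoint base A := by
    rw [Finset.disjoint_left]
    rintro s hs ht
    simp only [hbase, hA, Finset.mem_filter] at hs ht
    omega
  -- the column strip C = A ∪ D has exactly k markers
  have hCcard : A.card + D.card = k := by
    set C := P.filter (fun s => a ≤ s.1 ∧ s.1 < a + k) with hC
    have hCAD : C = A ∪ D := by
      ext s
      simp only [hC, hA, hD, Finset.mem_union, Finset.mem_filter]
      constructor
      · rintro ⟨hs, hx, hy⟩
        have := hColBound s hs hx hy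
        rcases Nat.lt_or_ge s.2 b with h | h
        · exact Or.inl ⟨hs, hx, hy, h⟩
        · exact Or.inr ⟨hs, hx, hy, h, this⟩
      · rintro (⟨hs, hx, hy, _⟩ | ⟨hs, hx, hy, _, _⟩) <;> exact ⟨hs, hx, hy⟩
    have hdisjAD : Disjoint A D := by
      rw [Finset.disjoint_left]
      rintro s hs ht
      simp only [hA, hD, Finset.mem_filter] at hs ht
      omega
    have himg : C.image Prod.fst = Finset.Ico a (a + k) := by
      apply Finset.Subset.antisymm
      · intro c hc
        simp only [Finset.mem_image] at hc
        obtain ⟨s, hs, rfl⟩ := hc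
        simp only [hC, Finset.mem_filter] at hs
        simp only [Finset.mem_Ico]
        exact ⟨hs.2.1, hs.2.2⟩
      · intro c hc
        simp only [Finset.mem_Ico] at hc
        have hsq : ((c, 0) : Square) ∈ F.squares := by
          have hm := hd (c - a) (by omega)
          exact F.closed _ hm (c, 0) (by omega) (by omega)
        obtain ⟨r, hr⟩ := (hfull (c, 0) hsq).1
        simp only [Finset.mem_image]
        exact ⟨(c, r), by simp only [hC, Finset.mem_filter]; exact ⟨hr, by omega, by omega⟩, rfl⟩
    have hinjC : Set.InjOn Prod.fst (C : Set Square) := by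
      intro s hs t ht hst
      simp only [hC, Finset.coe_filter, Set.mem_setOf_eq] at hs ht
      exact hcol s hs.1 t ht.1 hst
    have := Finset.card_image_of_injOn hinjC
    rw [himg, Nat.card_Ico] at this
    have hC2 : C.card = k := by omega
    rw [hCAD, Finset.card_union_of_disjoint hdisjAD] at hC2
    exact hC2
  have hRcard : B.card + D.card = k := by
    set Rw := P.filter (fun s => b ≤ s.2 ∧ s.2 < b + k) with hR
    have hRBD : Rw = B ∪ D := by
      ext s
      simp only [hR, hB, hD, Finset.mem_union, Finset.mem_filter]
      constructor
      · rintro ⟨hs, hx, hy⟩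
        have := hRowBound s hs hx hy
        rcases Nat.lt_or_ge s.1 a with h | h
        · exact Or.inl ⟨hs, h, hx, hy⟩
        · exact Or.inr ⟨hs, h, this, hx, hy⟩
      · rintro (⟨hs, _, hx, hy⟩ | ⟨hs, _, _, hx, hy⟩) <;> exact ⟨hs, hx, hy⟩
    have hdisjBD : Disjoint B D := by
      rw [Finset.disjoint_left]
      rintro s hs ht
      simp only [hB, hD, Finset.mem_filter] at hs ht
      omega
    have himg : Rw.image Prod.snd = Finset.Ico b (b + k) := by
      apply Finset.Subset.antisymm
      · intro r hr
        simp only [Finset.mem_image] at hr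
        obtain ⟨s, hs, rfl⟩ := hr
        simp only [hR, Finset.mem_filter] at hs
        simp only [Finset.mem_Ico]
        exact ⟨hs.2.1, hs.2.2⟩
      · intro r hr
        simp only [Finset.mem_Ico] at hr
        have hk1 : 1 ≤ k := by omega
        have hm := hd (k - 1 - (r - b)) (by omega)
        have he : b + (k - 1 - (k - 1 - (r - b))) = r := by omega
        rw [he] at hm
        obtain ⟨c, hc⟩ := (hfull _ hm).2
        simp only [Finset.mem_image]
        exact ⟨(c, r), by simp only [hR, Finset.mem_filter]; exact ⟨hc, by omega, by omega⟩, rfl⟩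
    have hinjR : Set.InjOn Prod.snd (Rw : Set Square) := by
      intro s hs t ht hst
      simp only [hR, Finset.coe_filter, Set.mem_setOf_eq] at hs ht
      exact hrow s hs.1 t ht.1 hst
    have := Finset.card_image_of_injOn hinjR
    rw [himg, Nat.card_Ico] at this
    have hR2 : Rw.card = k := by omega
    rw [hRBD, Finset.card_union_of_disjoint hdisjBD] at hR2
    exact hR2
  rw [hV1, hV2, Finset.card_union_of_disjoint hdisj1, Finset.card_union_of_disjoint hdisj2]
  omega

end Auxiliary

/-- Lemma 2, 231 case.  Let `P` be a full rook placement on a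
Ferrers board `F`, let `S = S(P,F)`, and let `N = N(F,·)` count the markers that
any full rook placement on `F` has in `R(V)`.  If `(F, S)` satisfies the
231-conditions then `(F, S⁺)` satisfies the 312-conditions. -/
theorem plusSeq_conditions312_of_conditions231 {n : ℕ} (F : FerrersBoard n)
    (P : Finset Square) (hP : IsFullPlacement F P) (N : ℕ × ℕ → ℕ)
    (hN : ∀ Q : Finset Square, IsFullPlacement F Q →
      ∀ V : ℕ × ℕ, F.IsBorderVertex V → (Q ∩ RV V).card = N V)
    (h231 : Conditions231 F (SPV P)) :
    Conditions312 F (plusSeq N (SPV P)) := by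
  obtain ⟨hmono, h0a, h0b, h0c, hdiag⟩ := h231
  have hNP : ∀ V, F.IsBorderVertex V → N V = (P ∩ RV V).card :=
    fun V hV => (hN P hP V hV).symm
  have hSdef : ∀ V, SPV P V = maxIncSeq (P ∩ RV V) := fun _ => rfl
  have hSN : ∀ V, F.IsBorderVertex V → SPV P V ≤ N V := by
    intro V hV
    rw [hNP V hV, hSdef]
    exact maxIncSeq_le_card _
  have hS0 : ∀ V, F.IsBorderVertex V → (SPV P V = 0 ↔ N V = 0) := by
    intro V hV
    rw [hNP V hV, hSdef]
    constructor
    · intro h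
      by_contra hne
      have hne' : (P ∩ RV V).Nonempty := Finset.card_pos.1 (Nat.pos_of_ne_zero hne)
      have := one_le_maxIncSeq hne'
      omega
    · intro h
      have := maxIncSeq_le_card (P ∩ RV V)
      omega
  -- N increases by exactly 1 along a nondegenerate border step
  have hNstep : ∀ V1 V2 : ℕ × ℕ, F.IsBorderVertex V1 → F.IsBorderVertex V2 →
      (LeftOf V1 V2 ∨ Below V1 V2) → SPV P V2 ≠ 0 → N V2 = N V1 + 1 := by
    intro V1 V2 hb1 hb2 hadj hSne
    have hNV2 : 1 ≤ N V2 := by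
      by_contra h
      push_neg at h
      exact hSne ((hS0 V2 hb2).2 (by omega))
    obtain ⟨s, hsmem⟩ :
        ∃ s, s ∈ P ∩ RV V2 := by
      rw [hNP V2 hb2] at hNV2
      exact Finset.card_pos.1 hNV2
    have hsbound := (mem_RV).1 (Finset.mem_inter.1 hsmem).2
    rw [hNP _ hb1, hNP _ hb2]
    rcases hadj with ⟨h1, h2⟩ | ⟨h1, h2⟩
    · -- LeftOf
      have hV2eq : V2 = (V1.1 + 1, V1.2) := by rw [← h1, ← h2]
      have hbeq : F.colHeight V1.1 = V1.2 := by
        have hx := hb2.2.2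
        have hy := hb1.2.1
        rw [h1, h2] at hx
        have hsimp : V1.1 + 1 - 1 = V1.1 := by omega
        rw [hsimp] at hx
        omega
      have hb1' : 1 ≤ V1.2 := by
        have := hsbound.2
        omega
      rw [hV2eq]
      exact card_RV_right F P hP hbeq hb1'
    · -- Below
      have hV2eq : V2 = (V1.1, V1.2 + 1) := by rw [← h1, ← h2]
      have hca : F.colHeight V1.1 ≤ V1.2 := hb1.2.1
      have hprev : V1.2 < F.colHeight (V1.1 - 1) := by
        have hx := hb2.2.2
        rw [h1, h2] at hx
        omega
      have ha1 : 1 ≤ V1.1 := by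
        have := hsbound.1
        omega
      rw [hV2eq]
      exact card_RV_up F P hP hca hprev ha1
  -- N is constant on diagonal vertex pairs
  have hNdiagEq : ∀ V1 V2 : ℕ × ℕ, F.DiagonalVertices V1 V2 → N V1 = N V2 := by
    rintro V1 V2 ⟨hb1, hb2, k, hk1, hk2, hsq⟩
    rw [hNP V1 hb1, hNP V2 hb2]
    have hV1eq : V1 = (V1.1, V2.2 + k) := by rw [← hk2]
    have hV2eq : V2 = (V1.1 + k, V2.2) := by rw [← hk1]
    have hh1 : F.colHeight V1.1 ≤ V2.2 + k := by
      have := hb1.2.1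
      omega
    have hh2 : F.colHeight (V1.1 + k) ≤ V2.2 := by
      have := hb2.2.1
      rw [hk1] at this
      exact this
    rw [hV1eq, hV2eq]
    exact card_RV_diag F P hP hsq hh1 hh2
  have hplus0 : ∀ V, F.IsBorderVertex V → plusSeq N (SPV P) V = 0 → SPV P V = 0 := by
    intro V hV h
    by_contra hne
    have := hSN V hV
    simp only [plusSeq, if_neg hne] at h
    omega
  refine ⟨?_, ?_, ?_, ?_, ?_⟩
  · -- monotonicity
    intro V1 V2 hb1 hb2 hadj
    have hm := hmono V1 V2 hb1 hb2 hadj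
    by_cases h2 : SPV P V2 = 0
    · have h1 : SPV P V1 = 0 := by omega
      simp [plusSeq, h1, h2]
    · have hstep := hNstep V1 V2 hb1 hb2 hadj h2
      have hsn1 := hSN V1 hb1
      have hsn2 := hSN V2 hb2
      by_cases h1 : SPV P V1 = 0
      · have hn1 : N V1 = 0 := (hS0 V1 hb1).1 h1
        simp only [plusSeq, if_pos h1, if_neg h2]
        omega
      · simp only [plusSeq, if_neg h1, if_neg h2]
        omega
  · simp [plusSeq, h0a]
  · simp [plusSeq, h0b]
  · -- no consecutive zeros
    rintro V1 V2 hb1 hb2 hadj ⟨hz1, hz2⟩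
    exact h0c V1 V2 hb1 hb2 hadj ⟨hplus0 V1 hb1 hz1, hplus0 V2 hb2 hz2⟩
  · -- diagonal condition
    intro V1 V2 hdv
    have hb1 := hdv.1
    have hb2 := hdv.2.1
    have hEq := hNdiagEq V1 V2 hdv
    have hle := hdiag V1 V2 hdv
    by_cases h2 : SPV P V2 = 0
    · simp [plusSeq, h2]
    · have h1 : SPV P V1 ≠ 0 := by
        intro h1
        have hn1 : N V1 = 0 := (hS0 V1 hb1).1 h1
        exact h2 ((hS0 V2 hb2).2 (by omega))
      simp only [plusSeq, if_neg h1, if_neg h2]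
      have := hSN V2 hb2
      omega
end

section
/- Suppose P is a rook placement on a Ferrers board F, and A, B, C are the vertices at the NW, NE, and SE corners, respectively, of a square ℬ contained in F. Let a = S(P,A), b = S(P,B), c = S(P,C). Then: (1) if P has no marker in ℬ, then b = max(a,c); and (2) P has a marker in ℬ if and only if b = a+1 = c+1. -/
section GrowthAux

/-- `f` is an increasing sequence of markers of `M`. -/
def OkSeq (M : Finset Square) {k : ℕ} (f : Fin k → Square) : Prop :=
  (∀ i, f i ∈ M) ∧ ∀ i j : Fin k, i < j → (f i).1 < (f j).1 ∧ (f i).2 < (f j).2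

lemma okSeq_mono {M N : Finset Square} (h : M ⊆ N) {k : ℕ} {f : Fin k → Square}
    (hf : OkSeq M f) : OkSeq N f := ⟨fun i => h (hf.1 i), hf.2⟩

lemma bddAbove_okSet (M : Finset Square) :
    BddAbove {k : ℕ | ∃ f : Fin k → Square, OkSeq M f} := by
  refine ⟨M.card, fun k hk => ?_⟩
  obtain ⟨f, hf, hinc⟩ := hk
  have hcard : (Finset.univ : Finset (Fin k)).card ≤ M.card := by
    apply Finset.card_le_card_of_injOn f (fun i _ => hf i)
    intro i _ j _ hfeq
    by_contra hne
    rcases Ne.lt_or_gt hne with h | h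
    · have := (hinc i j h).1; rw [hfeq] at this; exact lt_irrefl _ this
    · have := (hinc j i h).1; rw [hfeq] at this; exact lt_irrefl _ this
  simpa using hcard

lemma maxIncSeq_eq_sSup (M : Finset Square) :
    maxIncSeq M = sSup {k : ℕ | ∃ f : Fin k → Square, OkSeq M f} := rfl

lemma le_maxIncSeq {M : Finset Square} {k : ℕ} {f : Fin k → Square} (hf : OkSeq M f) :
    k ≤ maxIncSeq M := by
  rw [maxIncSeq_eq_sSup]
  exact le_csSup (bddAbove_okSet M) ⟨f, hf⟩

lemma exists_okSeq (M : Finset Square) : ∃ f : Fin (maxIncSeq M) → Square, OkSeq M f := by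
  have h0 : (0 : ℕ) ∈ {k : ℕ | ∃ f : Fin k → Square, OkSeq M f} :=
    ⟨fun i => i.elim0, fun i => i.elim0, fun i => i.elim0⟩
  have := Nat.sSup_mem ⟨0, h0⟩ (bddAbove_okSet M)
  rw [← maxIncSeq_eq_sSup] at this
  exact this

lemma okSeq_snoc {M : Finset Square} {k : ℕ} {g : Fin k → Square} (hg : OkSeq M g)
    {s : Square} (hs : s ∈ M) (h : ∀ i, (g i).1 < s.1 ∧ (g i).2 < s.2) :
    OkSeq M (Fin.snoc g s) := by
  constructor
  · intro i
    rcases Fin.eq_castSucc_or_eq_last i with ⟨i', rfl⟩ | rfl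
    · rw [Fin.snoc_castSucc]; exact hg.1 i'
    · rw [Fin.snoc_last]; exact hs
  · intro i j hij
    rcases Fin.eq_castSucc_or_eq_last j with ⟨j', rfl⟩ | rfl
    · rcases Fin.eq_castSucc_or_eq_last i with ⟨i', rfl⟩ | rfl
      · rw [Fin.snoc_castSucc, Fin.snoc_castSucc]
        exact hg.2 i' j' (by simpa using hij)
      · exact absurd hij (by simp only [Fin.lt_iff_val_lt_val, Fin.val_last, Fin.coe_castSucc]; omega)
    · rcases Fin.eq_castSucc_or_eq_last i with ⟨i', rfl⟩ | rfl
      · rw [Fin.snoc_castSucc, Fin.snoc_last]; exact h i'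
      · exact absurd hij (lt_irrefl _)

lemma okSeq_init {M : Finset Square} {k : ℕ} {f : Fin (k + 1) → Square}
    (hf : OkSeq M f) : OkSeq M (f ∘ Fin.castSucc) :=
  ⟨fun i => hf.1 _, fun i j hij => hf.2 _ _ (by simpa using hij)⟩

lemma exists_okSeq_succ {M : Finset Square} {k : ℕ} (h : maxIncSeq M = k + 1) :
    ∃ f : Fin (k + 1) → Square, OkSeq M f := by
  obtain ⟨f, hf⟩ := exists_okSeq M
  exact ⟨f ∘ Fin.cast h.symm, fun i => hf.1 _, fun i j hij => hf.2 _ _ hij⟩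

end GrowthAux

/-- Lemma 4, growth rule.  Let `P` be a rook placement on a
Ferrers board `F` and let `sq = (x, y)` be a square of `F`, with NW, NE, SE
corners `A = (x, y+1)`, `B = (x+1, y+1)`, `C = (x+1, y)` and `a = S(P,A)`,
`b = S(P,B)`, `c = S(P,C)`.  Then: (1) if `P` has no marker in `sq` then
`b = max a c`; and (2) `P` has a marker in `sq` iff `b = a + 1 = c + 1`. -/
theorem growth_rule {n : ℕ} (F : FerrersBoard n) (P : Finset Square)
    (hP : IsRookPlacement F P) (sq : Square) (hsq : sq ∈ F.squares) :
    (sq ∉ P →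
      SPV P (sq.1 + 1, sq.2 + 1) = max (SPV P (sq.1, sq.2 + 1)) (SPV P (sq.1 + 1, sq.2))) ∧
    (sq ∈ P ↔
      SPV P (sq.1 + 1, sq.2 + 1) = SPV P (sq.1, sq.2 + 1) + 1 ∧
      SPV P (sq.1 + 1, sq.2 + 1) = SPV P (sq.1 + 1, sq.2) + 1) := by
  obtain ⟨hPF, hcol, hrow⟩ := hP
  obtain ⟨x, y⟩ := sq
  simp only [SPV] at *
  have hmem : ∀ (u v : ℕ) (s : Square), s ∈ P ∩ RV (u, v) ↔ s ∈ P ∧ s.1 < u ∧ s.2 < v := by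
    intro u v s
    simp [RV, Finset.mem_inter, Finset.mem_product, Finset.mem_range, and_assoc]
  set A := P ∩ RV ((x, y).1, (x, y).2 + 1) with hAdef
  set B := P ∩ RV ((x, y).1 + 1, (x, y).2 + 1) with hBdef
  set C := P ∩ RV ((x, y).1 + 1, (x, y).2) with hCdef
  have hAm : ∀ s : Square, s ∈ A ↔ s ∈ P ∧ s.1 < x ∧ s.2 < y + 1 := fun s => hmem _ _ s
  have hBm : ∀ s : Square, s ∈ B ↔ s ∈ P ∧ s.1 < x + 1 ∧ s.2 < y + 1 := fun s => hmem _ _ s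
  have hCm : ∀ s : Square, s ∈ C ↔ s ∈ P ∧ s.1 < x + 1 ∧ s.2 < y := fun s => hmem _ _ s
  have hAB : A ⊆ B := by
    intro s hs; rw [hAm] at hs; rw [hBm]; exact ⟨hs.1, by omega, by omega⟩
  have hCB : C ⊆ B := by
    intro s hs; rw [hCm] at hs; rw [hBm]; exact ⟨hs.1, by omega, by omega⟩
  have haleb : maxIncSeq A ≤ maxIncSeq B := by
    obtain ⟨f, hf⟩ := exists_okSeq A
    exact le_maxIncSeq (okSeq_mono hAB hf)
  have hcleb : maxIncSeq C ≤ maxIncSeq B := by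
    obtain ⟨f, hf⟩ := exists_okSeq C
    exact le_maxIncSeq (okSeq_mono hCB hf)
  -- b ≤ a + 1
  have hba1 : maxIncSeq B ≤ maxIncSeq A + 1 := by
    rcases Nat.eq_zero_or_eq_succ_pred (maxIncSeq B) with h0 | hk'
    · rw [h0]; exact Nat.zero_le _
    obtain ⟨k, hk⟩ : ∃ k, maxIncSeq B = k + 1 := ⟨_, hk'⟩
    obtain ⟨f, hf⟩ := exists_okSeq_succ hk
    have hinit : OkSeq A (f ∘ Fin.castSucc) := by
      refine ⟨fun i => ?_, (okSeq_init hf).2⟩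
      show f i.castSucc ∈ A
      have h1 := hf.1 i.castSucc
      rw [hBm] at h1
      have hL := hf.1 (Fin.last k)
      rw [hBm] at hL
      have h2 := (hf.2 i.castSucc (Fin.last k) (Fin.castSucc_lt_last i)).1
      rw [hAm]
      exact ⟨h1.1, by omega, h1.2.2⟩
    have := le_maxIncSeq hinit
    omega
  -- b ≤ c + 1
  have hbc1 : maxIncSeq B ≤ maxIncSeq C + 1 := by
    rcases Nat.eq_zero_or_eq_succ_pred (maxIncSeq B) with h0 | hk'
    · rw [h0]; exact Nat.zero_le _
    obtain ⟨k, hk⟩ : ∃ k, maxIncSeq B = k + 1 := ⟨_, hk'⟩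
    obtain ⟨f, hf⟩ := exists_okSeq_succ hk
    have hinit : OkSeq C (f ∘ Fin.castSucc) := by
      refine ⟨fun i => ?_, (okSeq_init hf).2⟩
      show f i.castSucc ∈ C
      have h1 := hf.1 i.castSucc
      rw [hBm] at h1
      have hL := hf.1 (Fin.last k)
      rw [hBm] at hL
      have h2 := (hf.2 i.castSucc (Fin.last k) (Fin.castSucc_lt_last i)).2
      rw [hCm]
      exact ⟨h1.1, h1.2.1, by omega⟩
    have := le_maxIncSeq hinit
    omega
  -- case no marker: b ≤ max a c
  have hbmax : (x, y) ∉ P → maxIncSeq B ≤ max (maxIncSeq A) (maxIncSeq C) := by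
    intro hnot
    rcases Nat.eq_zero_or_eq_succ_pred (maxIncSeq B) with h0 | hk'
    · rw [h0]; exact Nat.zero_le _
    obtain ⟨k, hk⟩ : ∃ k, maxIncSeq B = k + 1 := ⟨_, hk'⟩
    obtain ⟨f, hf⟩ := exists_okSeq_succ hk
    have hL := hf.1 (Fin.last k)
    rw [hBm] at hL
    have hLne : f (Fin.last k) ≠ (x, y) := fun h => hnot (h ▸ hL.1)
    have hLlt : (f (Fin.last k)).1 < x ∨ (f (Fin.last k)).2 < y := by
      by_contra hcon
      push_neg at hcon
      exact hLne (Prod.ext (by omega) (by omega))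
    have hcolb : ∀ i : Fin (k + 1), (f i).1 ≤ (f (Fin.last k)).1 := by
      intro i
      rcases eq_or_lt_of_le (Fin.le_last i) with h | h
      · rw [h]
      · exact le_of_lt (hf.2 i (Fin.last k) h).1
    have hrowb : ∀ i : Fin (k + 1), (f i).2 ≤ (f (Fin.last k)).2 := by
      intro i
      rcases eq_or_lt_of_le (Fin.le_last i) with h | h
      · rw [h]
      · exact le_of_lt (hf.2 i (Fin.last k) h).2
    rcases hLlt with h | h
    · have : OkSeq A f := by
        refine ⟨fun i => ?_, hf.2⟩
        have h1 := hf.1 i; rw [hBm] at h1; rw [hAm]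
        have := hcolb i
        exact ⟨h1.1, by omega, h1.2.2⟩
      rw [hk]
      exact le_max_of_le_left (le_maxIncSeq this)
    · have : OkSeq C f := by
        refine ⟨fun i => ?_, hf.2⟩
        have h1 := hf.1 i; rw [hBm] at h1; rw [hCm]
        have := hrowb i
        exact ⟨h1.1, h1.2.1, by omega⟩
      rw [hk]
      exact le_max_of_le_right (le_maxIncSeq this)
  -- case marker present: a + 1 ≤ b and c + 1 ≤ b
  have hsqB : (x, y) ∈ P → (x, y) ∈ B := by
    intro h; rw [hBm]; exact ⟨h, by omega, by omega⟩
  have hab : (x, y) ∈ P → maxIncSeq A + 1 ≤ maxIncSeq B := by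
    intro hin
    obtain ⟨g, hg⟩ := exists_okSeq A
    have hbig : ∀ i, (g i).1 < (x, y).1 ∧ (g i).2 < (x, y).2 := by
      intro i
      have h1 := hg.1 i; rw [hAm] at h1
      refine ⟨h1.2.1, ?_⟩
      rcases Nat.lt_or_ge (g i).2 y with h | h
      · exact h
      · exfalso
        have heq : (g i).2 = (x, y).2 := by omega
        have := hrow (g i) h1.1 (x, y) hin heq
        rw [this] at h1
        omega
    have := le_maxIncSeq (okSeq_snoc (okSeq_mono hAB hg) (hsqB hin) hbig)
    exact this
  have hcb : (x, y) ∈ P → maxIncSeq C + 1 ≤ maxIncSeq B := by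
    intro hin
    obtain ⟨g, hg⟩ := exists_okSeq C
    have hbig : ∀ i, (g i).1 < (x, y).1 ∧ (g i).2 < (x, y).2 := by
      intro i
      have h1 := hg.1 i; rw [hCm] at h1
      refine ⟨?_, h1.2.2⟩
      rcases Nat.lt_or_ge (g i).1 x with h | h
      · exact h
      · exfalso
        have heq : (g i).1 = (x, y).1 := by omega
        have := hcol (g i) h1.1 (x, y) hin heq
        rw [this] at h1
        omega
    have := le_maxIncSeq (okSeq_snoc (okSeq_mono hCB hg) (hsqB hin) hbig)
    exact this
  refine ⟨fun hnot => le_antisymm (hbmax hnot) (max_le haleb hcleb), ?_, ?_⟩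
  · intro hin
    exact ⟨by have := hab hin; omega, by have := hcb hin; omega⟩
  · rintro ⟨h1, h2⟩
    by_contra hnot
    have h3 := le_antisymm (hbmax hnot) (max_le haleb hcleb)
    rcases max_choice (maxIncSeq A) (maxIncSeq C) with h | h <;> omega
end
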